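/- (Combined main theorem as a pure lattice statement.) Let p ≥ 1, γ > 1, r > 0, τ > 0, let b_1, …, b_n ∈ ℤ^d be linearly independent, let t ∈ ℤ^d, let L = L(b_1, …, b_n), and assume λ_n^{(p)}(L)^p ≤ τ · r^p. Set α^p = max(r^p(τ − 1), γ^p r^p / (2^p − 1)) with α > 0, set r' = (r^p + α^p)^{1/p}, and let L' ⊂ ℝ^{d+1} be the lattice generated by (b_1, 0), …, (b_n, 0), (t, α); L' has rank n+1. Then for any γ' ≥ 1 with γ'^p < (γ^p r^p + α^p)/(r^p + α^p): if some v ∈ L satisfies ‖v − t‖_p ≤ r then λ_{n+1}^{(p)}(L') ≤ r', while if every v ∈ L satisfies ‖v − t‖_p > γ·r then λ_{n+1}^{(p)}(L') > γ'·r'. Moreover such a γ' > 1 exists. -/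
import Mathlib


/-- The ℓ_p "norm" of a vector `x ∈ ℝ^d`: `(∑ i, |x i| ^ p) ^ (1/p)`. -/
noncomputable def lpNorm (p : ℝ) {d : ℕ} (x : Fin d → ℝ) : ℝ :=
  (∑ i, |x i| ^ p) ^ (1 / p)

/-- Membership in the lattice generated by the vectors `b 0, …, b (n-1)`. -/
def inLattice {n d : ℕ} (b : Fin n → Fin d → ℝ) (v : Fin d → ℝ) : Prop :=
  ∃ z : Fin n → ℤ, v = ∑ i, (z i : ℝ) • b i

/-- The `k`-th successive minimum (in the ℓ_p norm) of the lattice generated by `b`. -/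
noncomputable def succMin (p : ℝ) {n d : ℕ} (b : Fin n → Fin d → ℝ) (k : ℕ) : ℝ :=
  sInf {ℓ : ℝ | ∃ v : Fin k → Fin d → ℝ,
    LinearIndependent ℝ v ∧ (∀ i, inLattice b (v i)) ∧ ∀ i, lpNorm p (v i) ≤ ℓ}

section Helpers

lemma sumAbs_nonneg (p : ℝ) {d : ℕ} (x : Fin d → ℝ) : 0 ≤ ∑ j, |x j| ^ p :=
  Finset.sum_nonneg fun _ _ => Real.rpow_nonneg (abs_nonneg _) _

lemma lpNorm_nonneg (p : ℝ) {d : ℕ} (x : Fin d → ℝ) : 0 ≤ lpNorm p x :=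
  Real.rpow_nonneg (sumAbs_nonneg p x) _

lemma lpNorm_rpow {p : ℝ} (hp : 0 < p) {d : ℕ} (x : Fin d → ℝ) :
    lpNorm p x ^ p = ∑ j, |x j| ^ p := by
  rw [lpNorm, ← Real.rpow_mul (sumAbs_nonneg p x), one_div_mul_cancel hp.ne', Real.rpow_one]

lemma rpow_inv_rpow' {p s : ℝ} (hp : 0 < p) (hs : 0 ≤ s) : (s ^ (1/p)) ^ p = s := by
  rw [← Real.rpow_mul hs, one_div_mul_cancel hp.ne', Real.rpow_one]

lemma lpNorm_le_iff {p : ℝ} (hp : 0 < p) {d : ℕ} {x : Fin d → ℝ} {ℓ : ℝ} (hℓ : 0 ≤ ℓ) :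
    lpNorm p x ≤ ℓ ↔ ∑ j, |x j| ^ p ≤ ℓ ^ p := by
  constructor
  · intro h
    rw [← lpNorm_rpow hp]
    exact Real.rpow_le_rpow (lpNorm_nonneg p x) h hp.le
  · intro h
    have h2 := Real.rpow_le_rpow (sumAbs_nonneg p x) h (by positivity : (0:ℝ) ≤ 1/p)
    rw [show (ℓ ^ p) ^ (1/p) = ℓ from by
      rw [← Real.rpow_mul hℓ, mul_one_div_cancel hp.ne', Real.rpow_one]] at h2
    exact h2

lemma le_of_rpow_le {p a c : ℝ} (hp : 0 < p) (hc : 0 ≤ c) (ha : 0 ≤ a)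
    (h : c ^ p ≤ a ^ p) : c ≤ a := by
  by_contra hlt
  push_neg at hlt
  exact absurd h (not_le.mpr (Real.rpow_lt_rpow ha hlt hp))

lemma snoc_add {d : ℕ} (x y : Fin d → ℝ) (a c : ℝ) :
    (Fin.snoc x a + Fin.snoc y c : Fin (d+1) → ℝ) = Fin.snoc (x + y) (a + c) := by
  funext j
  refine Fin.lastCases ?_ (fun j => ?_) j <;> simp

lemma snoc_smul {d : ℕ} (c : ℝ) (x : Fin d → ℝ) (a : ℝ) :
    (c • (Fin.snoc x a : Fin (d+1) → ℝ)) = Fin.snoc (c • x) (c * a) := by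
  funext j
  refine Fin.lastCases ?_ (fun j => ?_) j <;> simp

lemma sum_snoc {m d : ℕ} (f : Fin m → Fin d → ℝ) (g : Fin m → ℝ) :
    ∑ i, (Fin.snoc (f i) (g i) : Fin (d+1) → ℝ) = Fin.snoc (∑ i, f i) (∑ i, g i) := by
  funext j
  rw [Finset.sum_apply]
  refine Fin.lastCases ?_ (fun j => ?_) j <;> simp [Finset.sum_apply]

lemma sumAbs_snoc (p : ℝ) {d : ℕ} (x : Fin d → ℝ) (a : ℝ) :
    ∑ j : Fin (d+1), |(Fin.snoc x a : Fin (d+1) → ℝ) j| ^ p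
      = (∑ j, |x j| ^ p) + |a| ^ p := by
  rw [Fin.sum_univ_castSucc]
  simp

lemma lpNorm_snoc_zero {p : ℝ} (hp : 0 < p) {d : ℕ} (x : Fin d → ℝ) :
    lpNorm p (Fin.snoc x 0 : Fin (d+1) → ℝ) = lpNorm p x := by
  unfold lpNorm
  rw [sumAbs_snoc]
  simp [Real.zero_rpow hp.ne']

noncomputable def padL (d : ℕ) : (Fin d → ℝ) →ₗ[ℝ] (Fin (d+1) → ℝ) where
  toFun x := Fin.snoc x 0
  map_add' x y := by rw [snoc_add, add_zero]
  map_smul' c x := by simp only [RingHom.id_apply]; rw [snoc_smul, mul_zero]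

lemma padL_ker (d : ℕ) : LinearMap.ker (padL d) = ⊥ := by
  ext x
  simp only [LinearMap.mem_ker, Submodule.mem_bot]
  constructor
  · intro h
    funext j
    have := congrFun h j.castSucc
    simpa [padL] using this
  · rintro rfl; simp [padL]; funext j; refine Fin.lastCases ?_ (fun j => ?_) j <;> simp

lemma last_coord_span {m d : ℕ} (f : Fin m → Fin d → ℝ) {y : Fin (d+1) → ℝ}
    (hy : y ∈ Submodule.span ℝ (Set.range (fun i => (Fin.snoc (f i) 0 : Fin (d+1) → ℝ)))) :
    y (Fin.last d) = 0 := by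
  have hle : Submodule.span ℝ (Set.range (fun i => (Fin.snoc (f i) 0 : Fin (d+1) → ℝ)))
      ≤ LinearMap.ker (LinearMap.proj (R := ℝ) (φ := fun _ : Fin (d+1) => ℝ) (Fin.last d)) := by
    rw [Submodule.span_le]
    rintro _ ⟨i, rfl⟩
    simp [LinearMap.mem_ker]
  simpa [LinearMap.mem_ker] using hle hy

lemma li_snoc {m d : ℕ} {f : Fin m → Fin d → ℝ} (hf : LinearIndependent ℝ f)
    (x : Fin d → ℝ) {a : ℝ} (ha : a ≠ 0) :
    LinearIndependent ℝ
      (Fin.snoc (fun i => (Fin.snoc (f i) 0 : Fin (d+1) → ℝ)) (Fin.snoc x a) :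
        Fin (m+1) → Fin (d+1) → ℝ) := by
  rw [linearIndependent_fin_snoc]
  refine ⟨hf.map' (padL d) (padL_ker d), ?_⟩
  intro hmem
  have := last_coord_span f hmem
  simp at this
  exact ha this

lemma sum_w_eq {n d : ℕ} (B : Fin n → Fin d → ℝ) (tR : Fin d → ℝ) (α : ℝ)
    (z' : Fin (n+1) → ℤ) :
    ∑ j, (z' j : ℝ) • (Fin.snoc (fun i => (Fin.snoc (B i) 0 : Fin (d+1) → ℝ))
        (Fin.snoc tR α) : Fin (n+1) → Fin (d+1) → ℝ) j
      = Fin.snoc ((∑ i, (z' i.castSucc : ℝ) • B i) + (z' (Fin.last n) : ℝ) • tR)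
          ((z' (Fin.last n) : ℝ) * α) := by
  rw [Fin.sum_univ_castSucc]
  simp only [Fin.snoc_castSucc, Fin.snoc_last]
  have h1 : ∀ i : Fin n, (z' i.castSucc : ℝ) • (Fin.snoc (B i) 0 : Fin (d+1) → ℝ)
      = Fin.snoc ((z' i.castSucc : ℝ) • B i) ((z' i.castSucc : ℝ) * 0) :=
    fun i => snoc_smul _ _ _
  rw [Finset.sum_congr rfl fun i _ => h1 i, sum_snoc, snoc_smul, snoc_add]
  simp

lemma not_li_in_span {n d : ℕ} (B : Fin n → Fin d → ℝ) {v : Fin (n+1) → Fin (d+1) → ℝ}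
    (hv : LinearIndependent ℝ v)
    (hsub : ∀ i, v i ∈ Submodule.span ℝ
      (Set.range (fun i => (Fin.snoc (B i) 0 : Fin (d+1) → ℝ)))) :
    False := by
  set W := Submodule.span ℝ (Set.range (fun i => (Fin.snoc (B i) 0 : Fin (d+1) → ℝ))) with hW
  have hli : LinearIndependent ℝ (fun i => (⟨v i, hsub i⟩ : W)) := by
    apply LinearIndependent.of_comp W.subtype
    exact hv
  have h1 : Fintype.card (Fin (n+1)) ≤ Module.finrank ℝ W :=
    hli.fintype_card_le_finrank
  have h2 : Module.finrank ℝ W ≤ n := by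
    have := finrank_range_le_card (R := ℝ) (fun i => (Fin.snoc (B i) 0 : Fin (d+1) → ℝ))
    simpa [Set.finrank, Fintype.card_fin] using this
  simp [Fintype.card_fin] at h1
  omega

lemma inLattice_self {n d : ℕ} (B : Fin n → Fin d → ℝ) (i : Fin n) :
    inLattice B (B i) := by
  classical
  refine ⟨fun j => if j = i then 1 else 0, ?_⟩
  simp only [apply_ite, Int.cast_one, Int.cast_zero, ite_smul, one_smul, zero_smul]
  rw [Finset.sum_ite_eq' Finset.univ i B]
  simp

end Helpers


/-- combined main theorem: assume `λ_n^{(p)}(L)^p ≤ τ·r^p`, set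
`α^p = max(r^p(τ−1), γ^p r^p/(2^p−1))` with `α > 0`, set `r' = (r^p + α^p)^{1/p}`,
and let `L'` be the lattice generated by `(b_1,0), …, (b_n,0), (t,α)` (the family
`w`); these `n+1` generators are linearly independent, so `L'` has rank `n+1`.
Then for any `γ' ≥ 1` with `γ'^p < (γ^p r^p + α^p)/(r^p + α^p)`: if some `v ∈ L`
satisfies `‖v − t‖_p ≤ r` then `λ_{n+1}^{(p)}(L') ≤ r'`, while if every `v ∈ L`
satisfies `‖v − t‖_p > γ·r` then `λ_{n+1}^{(p)}(L') > γ'·r'`.  Moreover such a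
`γ' > 1` exists. -/
theorem stmt11 (p γ r τ : ℝ) (hp : 1 ≤ p) (hγ : 1 < γ) (hr : 0 < r) (hτ : 0 < τ)
    (n d : ℕ) (b : Fin n → Fin d → ℤ)
    (hb : LinearIndependent ℝ (fun i : Fin n => fun j : Fin d => (b i j : ℝ)))
    (t : Fin d → ℤ)
    (hmin : succMin p (fun i : Fin n => fun j : Fin d => (b i j : ℝ)) n ^ p ≤ τ * r ^ p)
    (α : ℝ) (hα : 0 < α)
    (hαp : α ^ p = max (r ^ p * (τ - 1)) (γ ^ p * r ^ p / (2 ^ p - 1)))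
    (r' : ℝ) (hr' : r' = (r ^ p + α ^ p) ^ (1 / p))
    (w : Fin (n + 1) → Fin (d + 1) → ℝ)
    (hw : w = Fin.snoc (fun i : Fin n => Fin.snoc (fun j => (b i j : ℝ)) (0 : ℝ))
      (Fin.snoc (fun j => (t j : ℝ)) α)) :
    LinearIndependent ℝ w ∧
    (∀ γ' : ℝ, 1 ≤ γ' →
      γ' ^ p < (γ ^ p * r ^ p + α ^ p) / (r ^ p + α ^ p) →
      ((∃ v : Fin d → ℝ,
          inLattice (fun i : Fin n => fun j : Fin d => (b i j : ℝ)) v ∧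
          lpNorm p (v - fun j => (t j : ℝ)) ≤ r) →
        succMin p w (n + 1) ≤ r') ∧
      ((∀ v : Fin d → ℝ,
          inLattice (fun i : Fin n => fun j : Fin d => (b i j : ℝ)) v →
          γ * r < lpNorm p (v - fun j => (t j : ℝ))) →
        γ' * r' < succMin p w (n + 1))) ∧
    (∃ γ' : ℝ, 1 < γ' ∧ γ' ^ p < (γ ^ p * r ^ p + α ^ p) / (r ^ p + α ^ p)) := by
  classical
  have hp0 : (0:ℝ) < p := lt_of_lt_of_le one_pos hp
  have hγ0 : (0:ℝ) < γ := lt_trans one_pos hγ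
  have hrp : (0:ℝ) < r ^ p := Real.rpow_pos_of_pos hr p
  have hαpp : (0:ℝ) < α ^ p := Real.rpow_pos_of_pos hα p
  have hγp1 : (1:ℝ) < γ ^ p :=
    (Real.one_lt_rpow_iff_of_pos hγ0).mpr (Or.inl ⟨hγ, hp0⟩)
  have hγprp : (0:ℝ) < γ ^ p * r ^ p := by positivity
  have hQ1 : 1 < (γ ^ p * r ^ p + α ^ p) / (r ^ p + α ^ p) := by
    rw [one_lt_div (by positivity)]
    nlinarith
  have hr'p : r' ^ p = r ^ p + α ^ p := by
    rw [hr']; exact rpow_inv_rpow' hp0 (by positivity)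
  have hr'0 : (0:ℝ) ≤ r' := by rw [hr']; positivity
  have htau : τ * r ^ p ≤ r ^ p + α ^ p := by
    have h1 : r ^ p * (τ - 1) ≤ α ^ p := hαp ▸ le_max_left _ _
    nlinarith
  -- Part 1
  have hwli : LinearIndependent ℝ w := by
    rw [hw]
    exact li_snoc hb (fun j => (t j : ℝ)) hα.ne'
  -- lattice membership in L'
  have hmemw : ∀ (z : Fin n → ℤ) (k : ℤ),
      inLattice w (Fin.snoc ((∑ i, (z i : ℝ) • fun j => (b i j : ℝ)) + (k : ℝ) •
        fun j => (t j : ℝ)) ((k : ℝ) * α)) := by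
    intro z k
    refine ⟨Fin.snoc z k, ?_⟩
    rw [hw, sum_w_eq]
    simp
  have hdecomp : ∀ u, inLattice w u → ∃ (z : Fin n → ℤ) (k : ℤ),
      u = Fin.snoc ((∑ i, (z i : ℝ) • fun j => (b i j : ℝ)) + (k : ℝ) •
        fun j => (t j : ℝ)) ((k : ℝ) * α) := by
    rintro u ⟨z', rfl⟩
    exact ⟨fun i => z' i.castSucc, z' (Fin.last n), by rw [hw, sum_w_eq]⟩
  -- the set S'
  set S' : Set ℝ := {ℓ : ℝ | ∃ v : Fin (n+1) → Fin (d+1) → ℝ,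
    LinearIndependent ℝ v ∧ (∀ i, inLattice w (v i)) ∧ ∀ i, lpNorm p (v i) ≤ ℓ} with hS'
  have hS'def : succMin p w (n + 1) = sInf S' := rfl
  have hS'bdd : BddBelow S' := by
    refine ⟨0, ?_⟩
    rintro ℓ ⟨v, -, -, hle⟩
    exact le_trans (lpNorm_nonneg p (v 0)) (hle 0)
  have hwmemw : ∀ i, inLattice w (w i) := inLattice_self w
  have hS'ne : S'.Nonempty :=
    ⟨∑ i, lpNorm p (w i), w, hwli, hwmemw, fun i =>
      Finset.single_le_sum (fun j _ => lpNorm_nonneg p (w j)) (Finset.mem_univ i)⟩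
  -- the set SL
  set SL : Set ℝ := {ℓ : ℝ | ∃ v : Fin n → Fin d → ℝ,
    LinearIndependent ℝ v ∧
    (∀ i, inLattice (fun i : Fin n => fun j : Fin d => (b i j : ℝ)) (v i)) ∧
    ∀ i, lpNorm p (v i) ≤ ℓ} with hSL
  have hSLdef : succMin p (fun i : Fin n => fun j : Fin d => (b i j : ℝ)) n = sInf SL := rfl
  have hSLne : SL.Nonempty := by
    refine ⟨∑ i, lpNorm p ((fun i : Fin n => fun j : Fin d => (b i j : ℝ)) i),
      (fun i : Fin n => fun j : Fin d => (b i j : ℝ)), hb, inLattice_self _, fun i => ?_⟩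
    exact Finset.single_le_sum
      (f := fun m => lpNorm p ((fun i : Fin n => fun j : Fin d => (b i j : ℝ)) m))
      (fun j _ => lpNorm_nonneg p _) (Finset.mem_univ i)
  have hlam0 : 0 ≤ succMin p (fun i : Fin n => fun j : Fin d => (b i j : ℝ)) n := by
    rcases Nat.eq_zero_or_pos n with hn | hn
    · haveI : IsEmpty (Fin n) := by rw [hn]; infer_instance
      have hnb : ¬ BddBelow SL := by
        rintro ⟨c, hc⟩
        have h1 : (c - 1) ∈ SL :=
          ⟨fun _ => 0, linearIndependent_empty_type, fun i => isEmptyElim i,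
            fun i => isEmptyElim i⟩
        have := hc h1
        linarith
      rw [hSLdef, Real.sInf_of_not_bddBelow hnb]
    · rw [hSLdef]
      apply Real.sInf_nonneg
      rintro ℓ ⟨u, -, -, hle⟩
      exact le_trans (lpNorm_nonneg p (u ⟨0, hn⟩)) (hle ⟨0, hn⟩)
  have hlamr' : succMin p (fun i : Fin n => fun j : Fin d => (b i j : ℝ)) n ≤ r' := by
    refine le_of_rpow_le hp0 hlam0 hr'0 ?_
    rw [hr'p]
    linarith
  refine ⟨hwli, ?_, ?_⟩
  · intro γ' hγ'1 hγ'Q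
    constructor
    · -- YES case
      rintro ⟨v, ⟨zv, hzv⟩, hvr⟩
      rw [hS'def]
      refine le_of_forall_gt_imp_ge_of_dense fun x hx => ?_
      have hεpos : 0 < x - r' := by linarith
      -- extract a family of n lattice vectors with norms < lam + (x - r')
      have hex : ∃ ℓ ∈ SL, ℓ < succMin p (fun i : Fin n => fun j : Fin d => (b i j : ℝ)) n
          + (x - r') := by
        by_cases hbb : BddBelow SL
        · rw [hSLdef] at *
          exact (csInf_lt_iff hbb hSLne).mp (by linarith)
        · rcases not_bddBelow_iff.mp hbb
            (succMin p (fun i : Fin n => fun j : Fin d => (b i j : ℝ)) n + (x - r')) with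
            ⟨ℓ, hℓ, hlt⟩
          exact ⟨ℓ, hℓ, hlt⟩
      obtain ⟨ℓ, ⟨u, huli, humem, hule⟩, hℓlt⟩ := hex
      have hℓx : ℓ < x := by linarith
      -- the new family
      set vs : Fin (n+1) → Fin (d+1) → ℝ :=
        Fin.snoc (fun i => (Fin.snoc (u i) 0 : Fin (d+1) → ℝ))
          (Fin.snoc ((fun j => (t j : ℝ)) - v) α) with hvs
      have hvsli : LinearIndependent ℝ vs := li_snoc huli _ hα.ne'
      have hvsmem : ∀ i, inLattice w (vs i) := by
        intro i
        refine Fin.lastCases ?_ (fun i₀ => ?_) i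
        · rw [hvs, Fin.snoc_last]
          have h0 := hmemw (fun m => -(zv m)) 1
          have heq : (∑ i, ((-(zv i) : ℤ) : ℝ) • fun j => (b i j : ℝ)) + ((1:ℤ) : ℝ) •
              (fun j => (t j : ℝ)) = (fun j => (t j : ℝ)) - v := by
            push_cast
            rw [hzv]
            funext j
            simp [Pi.sub_apply, Finset.sum_apply]
            ring
          rw [heq] at h0
          simpa using h0
        · rw [hvs, Fin.snoc_castSucc]
          obtain ⟨z, hz⟩ := humem i₀
          have h0 := hmemw z 0
          simp only [Int.cast_zero, zero_smul, add_zero, zero_mul] at h0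
          rw [hz]
          exact h0
      have hvsle : ∀ i, lpNorm p (vs i) ≤ max ℓ r' := by
        intro i
        refine Fin.lastCases ?_ (fun i₀ => ?_) i
        · rw [hvs, Fin.snoc_last]
          refine le_trans ?_ (le_max_right ℓ r')
          rw [lpNorm_le_iff hp0 hr'0, sumAbs_snoc, hr'p, abs_of_pos hα]
          have hsum : ∑ j, |((fun j => (t j : ℝ)) - v) j| ^ p
              = ∑ j, |(v - fun j => (t j : ℝ)) j| ^ p := by
            refine Finset.sum_congr rfl fun j _ => ?_
            rw [Pi.sub_apply, Pi.sub_apply, abs_sub_comm]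
          rw [hsum]
          have := (lpNorm_le_iff hp0 hr.le).mp hvr
          linarith
        · rw [hvs, Fin.snoc_castSucc, lpNorm_snoc_zero hp0]
          exact le_trans (hule i₀) (le_max_left ℓ r')
      have hmax : max ℓ r' ∈ S' := ⟨vs, hvsli, hvsmem, hvsle⟩
      refine le_trans (csInf_le hS'bdd hmax) ?_
      exact max_le hℓx.le hx.le
    · -- NO case
      intro hno
      rw [hS'def]
      set c : ℝ := (γ ^ p * r ^ p + α ^ p) ^ (1 / p) with hc
      have hc0 : (0:ℝ) ≤ c := by rw [hc]; positivity
      have hcp : c ^ p = γ ^ p * r ^ p + α ^ p := by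
        rw [hc]; exact rpow_inv_rpow' hp0 (by positivity)
      have key : ∀ ℓ' ∈ S', c ≤ ℓ' := by
        rintro ℓ' ⟨v, hvli, hvmem, hvle⟩
        have hdec := fun i => hdecomp (v i) (hvmem i)
        choose z k hvk using hdec
        by_cases hk : ∀ i, k i = 0
        · exfalso
          refine not_li_in_span (fun i : Fin n => fun j : Fin d => (b i j : ℝ)) hvli
            (fun i => ?_)
          have hvi := hvk i
          rw [hk i] at hvi
          simp only [Int.cast_zero, zero_smul, add_zero, zero_mul] at hvi
          rw [hvi]
          have hrw : (Fin.snoc (∑ m, (z i m : ℝ) • fun j => (b m j : ℝ)) 0 :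
              Fin (d+1) → ℝ) = ∑ m, (z i m : ℝ) •
              (Fin.snoc (fun j => (b m j : ℝ)) 0 : Fin (d+1) → ℝ) := by
            rw [Finset.sum_congr rfl (fun m _ => snoc_smul (z i m : ℝ)
              (fun j => (b m j : ℝ)) 0), sum_snoc]
            simp
          rw [hrw]
          exact Submodule.sum_mem _ fun m _ => Submodule.smul_mem _ _
            (Submodule.subset_span ⟨m, rfl⟩)
        · push_neg at hk
          obtain ⟨i, hki⟩ := hk
          refine le_trans (le_of_rpow_le hp0 hc0 (lpNorm_nonneg p (v i)) ?_) (hvle i)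
          rw [hcp, hvk i, lpNorm_rpow hp0, sumAbs_snoc]
          have habs : |(k i : ℝ) * α| ^ p = |(k i : ℝ)| ^ p * α ^ p := by
            rw [abs_mul, abs_of_pos hα, Real.mul_rpow (abs_nonneg _) hα.le]
          rw [habs]
          have hcases : (k i = 1 ∨ k i = -1) ∨ 2 ≤ |(k i : ℝ)| := by
            by_cases h1 : k i = 1 ∨ k i = -1
            · exact Or.inl h1
            · push_neg at h1
              right
              have h2 : (2:ℤ) ≤ |k i| := by
                rcases h1 with ⟨ha1, ha2⟩
                rcases le_or_gt 0 (k i) with h | h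
                · rw [abs_of_nonneg h]; omega
                · rw [abs_of_neg h]; omega
              calc (2:ℝ) = ((2:ℤ) : ℝ) := by norm_num
                _ ≤ ((|k i| : ℤ) : ℝ) := by exact_mod_cast h2
                _ = |(k i : ℝ)| := by push_cast; rfl
          have hγrp : (γ * r) ^ p = γ ^ p * r ^ p := Real.mul_rpow hγ0.le hr.le
          rcases hcases with h1 | h2
          · -- |k| = 1
            have habs1 : |(k i : ℝ)| ^ p = 1 := by
              rcases h1 with h | h <;> rw [h] <;> norm_num
            rw [habs1, one_mul]
            have hbig : γ ^ p * r ^ p < ∑ j, |((∑ m, (z i m : ℝ) • fun j => (b m j : ℝ))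
                + (k i : ℝ) • fun j => (t j : ℝ)) j| ^ p := by
              rcases h1 with h | h
              · -- k i = 1 : use -vb
                have hmemL : inLattice (fun i : Fin n => fun j : Fin d => (b i j : ℝ))
                    (∑ m, ((-(z i m) : ℤ) : ℝ) • fun j => (b m j : ℝ)) :=
                  ⟨fun m => -(z i m), rfl⟩
                have hlt := hno _ hmemL
                have hlt2 := Real.rpow_lt_rpow (by positivity) hlt hp0
                rw [hγrp, lpNorm_rpow hp0] at hlt2
                refine lt_of_lt_of_le hlt2 (le_of_eq ?_)
                refine Finset.sum_congr rfl fun j _ => ?_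
                rw [h]
                push_cast
                simp only [Pi.sub_apply, Pi.add_apply, Pi.smul_apply, Finset.sum_apply,
                  one_smul, smul_eq_mul]
                rw [← abs_neg]
                congr 1
                simp only [neg_mul, Finset.sum_neg_distrib]
                ring
              · -- k i = -1 : use vb
                have hmemL : inLattice (fun i : Fin n => fun j : Fin d => (b i j : ℝ))
                    (∑ m, (z i m : ℝ) • fun j => (b m j : ℝ)) := ⟨z i, rfl⟩
                have hlt := hno _ hmemL
                have hlt2 := Real.rpow_lt_rpow (by positivity) hlt hp0
                rw [hγrp, lpNorm_rpow hp0] at hlt2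
                refine lt_of_lt_of_le hlt2 (le_of_eq ?_)
                refine Finset.sum_congr rfl fun j _ => ?_
                rw [h]
                push_cast
                simp only [Pi.sub_apply, Pi.add_apply, Pi.smul_apply, Finset.sum_apply,
                  smul_eq_mul]
                congr 1
                ring
            linarith
          · -- |k| ≥ 2
            have h2p : (2:ℝ) ≤ 2 ^ p := by
              calc (2:ℝ) = 2 ^ (1:ℝ) := (Real.rpow_one 2).symm
                _ ≤ 2 ^ p := (Real.rpow_le_rpow_left_iff one_lt_two).mpr hp
            have hkp : (2:ℝ) ^ p ≤ |(k i : ℝ)| ^ p :=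
              Real.rpow_le_rpow (by norm_num) h2 hp0.le
            have hαdiv : γ ^ p * r ^ p / (2 ^ p - 1) ≤ α ^ p := hαp ▸ le_max_right _ _
            have h2p1 : (0:ℝ) < 2 ^ p - 1 := by linarith
            have hmul : γ ^ p * r ^ p ≤ α ^ p * (2 ^ p - 1) := by
              rw [div_le_iff₀ h2p1] at hαdiv
              linarith
            have hs0 := sumAbs_nonneg p ((∑ m, (z i m : ℝ) • fun j => (b m j : ℝ))
              + (k i : ℝ) • fun j => (t j : ℝ))
            nlinarith [mul_le_mul_of_nonneg_right hkp hαpp.le]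
      have h1 : c ≤ sInf S' := le_csInf hS'ne key
      have hγ'r'p : (γ' * r') ^ p = γ' ^ p * (r ^ p + α ^ p) := by
        rw [Real.mul_rpow (by linarith) hr'0, hr'p]
      have hlt : (γ' * r') ^ p < c ^ p := by
        rw [hγ'r'p, hcp]
        have := mul_lt_mul_of_pos_right hγ'Q (by positivity : (0:ℝ) < r ^ p + α ^ p)
        rwa [div_mul_cancel₀ _ (by positivity : (r ^ p + α ^ p) ≠ 0)] at this
      have h2 : γ' * r' < c := by
        by_contra hcon
        push_neg at hcon
        exact absurd hlt (not_lt.mpr (Real.rpow_le_rpow hc0 hcon hp0.le))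
      linarith
  · -- existence of γ'
    refine ⟨((1 + (γ ^ p * r ^ p + α ^ p) / (r ^ p + α ^ p)) / 2) ^ (1/p), ?_, ?_⟩
    · exact (Real.one_lt_rpow_iff_of_pos (by linarith)).mpr
        (Or.inl ⟨by linarith, by positivity⟩)
    · rw [rpow_inv_rpow' hp0 (by linarith)]
      linarith
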